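/- Let g ≥ 1 and let A, B ∈ Sp(2g,ℝ). Then the restriction of the bilinear form ⟨·,·⟩_{A,B} to the subspace V_{A,B} is symmetric; that is, for all (x₁,y₁), (x₂,y₂) ∈ V_{A,B} one has (x₁+y₁) · J(I−B)y₂ = (x₂+y₂) · J(I−B)y₁. -/

import Mathlib

open Matrix

noncomputable section

/-- Index type for `ℝ^{2g}` written in `g × g` block form. -/
abbrev SpIdx (g : ℕ) := Fin g ⊕ Fin g

/-- Real `2g × 2g` matrices. -/
abbrev SpMat (g : ℕ) := Matrix (SpIdx g) (SpIdx g) ℝ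

/-- Vectors in `ℝ^{2g}`. -/
abbrev SpVec (g : ℕ) := SpIdx g → ℝ

/-- The standard symplectic matrix `J = [[0, -I],[I, 0]]`. -/
def symJ (g : ℕ) : SpMat g := Matrix.fromBlocks 0 (-1) 1 0

/-- `M` belongs to `Sp(2g, ℝ)`: `Mᵀ J M = J`. -/
def IsSymplectic {g : ℕ} (M : SpMat g) : Prop := Mᵀ * symJ g * M = symJ g

/-- The subspace `V_{A,B} = {(x,y) : (A⁻¹ - I)x + (B - I)y = 0}`. -/
def VAB {g : ℕ} (A B : SpMat g) : Set (SpVec g × SpVec g) :=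
  { z | (A⁻¹ *ᵥ z.1 - z.1) + (B *ᵥ z.2 - z.2) = 0 }

/-- Meyer's bilinear form `⟨(x₁,y₁),(x₂,y₂)⟩_{A,B} = (x₁ + y₁) · J (I - B) y₂`. -/
def meyerForm {g : ℕ} (A B : SpMat g) (z₁ z₂ : SpVec g × SpVec g) : ℝ :=
  (z₁.1 + z₁.2) ⬝ᵥ (symJ g *ᵥ (z₂.2 - B *ᵥ z₂.2))

/-- Maximal dimension of a subspace of `V_{A,B}` on which Meyer's form is positive definite. -/
def meyerPosIndex {g : ℕ} (A B : SpMat g) : ℕ :=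
  sSup { n | ∃ W : Submodule ℝ (SpVec g × SpVec g),
    (W : Set (SpVec g × SpVec g)) ⊆ VAB A B ∧
    (∀ z ∈ W, z ≠ 0 → 0 < meyerForm A B z z) ∧ Module.finrank ℝ W = n }

/-- Maximal dimension of a subspace of `V_{A,B}` on which Meyer's form is negative definite. -/
def meyerNegIndex {g : ℕ} (A B : SpMat g) : ℕ :=
  sSup { n | ∃ W : Submodule ℝ (SpVec g × SpVec g),
    (W : Set (SpVec g × SpVec g)) ⊆ VAB A B ∧
    (∀ z ∈ W, z ≠ 0 → meyerForm A B z z < 0) ∧ Module.finrank ℝ W = n }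

/-- Meyer's signature cocycle `τ_g(A,B)`. -/
def meyerTau {g : ℕ} (A B : SpMat g) : ℤ :=
  (meyerPosIndex A B : ℤ) - (meyerNegIndex A B : ℤ)

/-- Commutator `a b a⁻¹ b⁻¹` of matrices (using the nonsingular matrix inverse). -/
def matComm {g : ℕ} (a b : SpMat g) : SpMat g := a * b * a⁻¹ * b⁻¹

/-! On `ℝ^{2g}` with its symplectic form `ω(u, v) = u ⬝ᵥ J v`, write `wᵢ = xᵢ + yᵢ`; membership in
`V_{A,B}` says `A⁻¹ xᵢ = wᵢ - B yᵢ`. Since `A⁻¹` and `B` preserve `ω`, expanding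
`ω(A⁻¹ x₁, A⁻¹ x₂) = ω(x₁, x₂)` and `ω(B y₁, B y₂) = ω(y₁, y₂)` bilinearly and using that `ω` is
alternating yields exactly `ω(w₁, y₂ - B y₂) = ω(w₂, y₁ - B y₁)`. -/

namespace LinearMap.BilinForm

variable {R M : Type*} [CommRing R] [AddCommGroup M] [Module R M]

theorem IsAlt.apply_add_sub_comm_of_isometry {ω : LinearMap.BilinForm R M} (hω : ω.IsAlt)
    {a b : M → M} (ha : ∀ u v, ω (a u) (a v) = ω u v) (hb : ∀ u v, ω (b u) (b v) = ω u v)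
    {x₁ y₁ x₂ y₂ : M} (h₁ : a x₁ = x₁ + y₁ - b y₁) (h₂ : a x₂ = x₂ + y₂ - b y₂) :
    ω (x₁ + y₁) (y₂ - b y₂) = ω (x₂ + y₂) (y₁ - b y₁) := by
  have hx := ha x₁ x₂
  rw [h₁, h₂] at hx
  simp only [map_add, map_sub, LinearMap.add_apply, LinearMap.sub_apply] at hx ⊢
  linear_combination hx - hb y₁ y₂ + hω.neg_eq x₂ y₁ + hω.neg_eq y₂ y₁ - hω.neg_eq x₂ (b y₁)
    - hω.neg_eq y₂ (b y₁)

end LinearMap.BilinForm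

theorem symJ_eq_J (g : ℕ) : symJ g = Matrix.J (Fin g) ℝ := rfl

theorem isSymplectic_iff_mem_symplecticGroup {g : ℕ} {M : SpMat g} :
    IsSymplectic M ↔ M ∈ symplecticGroup (Fin g) ℝ :=
  SymplecticGroup.mem_iff'.symm

theorem IsSymplectic.inv {g : ℕ} {M : SpMat g} (hM : IsSymplectic M) : IsSymplectic M⁻¹ := by
  rw [isSymplectic_iff_mem_symplecticGroup] at hM ⊢
  simpa [SymplecticGroup.coe_inv'] using (⟨M, hM⟩⁻¹ : symplecticGroup (Fin g) ℝ).2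

theorem isAlt_toBilin'_symJ (g : ℕ) : (toBilin' (symJ g)).IsAlt := by
  intro x
  rw [toBilin'_apply', symJ_eq_J]
  have h : x ⬝ᵥ (J (Fin g) ℝ)ᵀ *ᵥ x = x ⬝ᵥ J (Fin g) ℝ *ᵥ x := by
    rw [dotProduct_mulVec, vecMul_transpose, dotProduct_comm]
  rw [J_transpose, neg_mulVec, dotProduct_neg] at h
  linarith

theorem IsSymplectic.toBilin'_symJ_mulVec {g : ℕ} {M : SpMat g} (hM : IsSymplectic M)
    (u v : SpVec g) : toBilin' (symJ g) (M *ᵥ u) (M *ᵥ v) = toBilin' (symJ g) u v := by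
  have h := LinearMap.congr_fun₂ (Matrix.toBilin'_comp (symJ g) M M) u v
  rwa [show Mᵀ * symJ g * M = symJ g from hM] at h

theorem mem_VAB {g : ℕ} {A B : SpMat g} {z : SpVec g × SpVec g} :
    z ∈ VAB A B ↔ A⁻¹ *ᵥ z.1 = z.1 + z.2 - B *ᵥ z.2 := by
  rw [VAB, Set.mem_ofPred_eq]
  constructor <;> intro h <;> linear_combination h

theorem meyerForm_symm_on_VAB_general (g : ℕ) (A B : SpMat g)
    (hA : IsSymplectic A) (hB : IsSymplectic B)
    (z₁ z₂ : SpVec g × SpVec g) (hz₁ : z₁ ∈ VAB A B) (hz₂ : z₂ ∈ VAB A B) :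
    meyerForm A B z₁ z₂ = meyerForm A B z₂ z₁ := by
  simp only [meyerForm, ← toBilin'_apply']
  exact (isAlt_toBilin'_symJ g).apply_add_sub_comm_of_isometry hA.inv.toBilin'_symJ_mulVec
    hB.toBilin'_symJ_mulVec (mem_VAB.mp hz₁) (mem_VAB.mp hz₂)

/-- For `g ≥ 1` and `A, B ∈ Sp(2g,ℝ)`, the restriction of the bilinear form
`⟨·,·⟩_{A,B}` to the subspace `V_{A,B}` is symmetric. -/
theorem meyerForm_symm_on_VAB (g : ℕ) (hg : 1 ≤ g) (A B : SpMat g)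
    (hA : IsSymplectic A) (hB : IsSymplectic B)
    (z₁ z₂ : SpVec g × SpVec g) (hz₁ : z₁ ∈ VAB A B) (hz₂ : z₂ ∈ VAB A B) :
    meyerForm A B z₁ z₂ = meyerForm A B z₂ z₁ :=
  meyerForm_symm_on_VAB_general g A B hA hB z₁ z₂ hz₁ hz₂
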